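/- arXiv:1406.1643 — 4 statements merged into one kernel-verified Lean document; each statement's English description precedes it below -/
import Mathlib

section
/- Let w : [0,1]² → ℝ be continuous. Then the map φ^w : X² → ℝ defined by φ^w(x¹,x²) = Σ_{u ∈ x¹} Σ_{v ∈ x²} w(u,v) is continuous with respect to the product metric d_{X²} on X² induced by the Skorohod-type metric d_X on finite point configurations. -/
open Set

/-- The counting function of a finite point configuration `x ⊆ [0,1]`:
`N_x(t) = #{u ∈ x : u ≤ t}`. -/
noncomputable def countFn (x : Finset ℝ) (t : ℝ) : ℝ :=
  ((x.filter (fun u => u ≤ t)).card : ℝ)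

/-- A strictly increasing continuous mapping of `[0,1]` onto itself. -/
def IsTimeChange (l : ℝ → ℝ) : Prop :=
  StrictMonoOn l (Set.Icc 0 1) ∧ ContinuousOn l (Set.Icc 0 1) ∧
    l '' Set.Icc 0 1 = Set.Icc 0 1

/-- The uniform Skorohod metric on (càdlàg) functions on `[0,1]`. -/
noncomputable def dD (f g : ℝ → ℝ) : ℝ :=
  sInf {ε : ℝ | 0 < ε ∧ ∃ l : ℝ → ℝ, IsTimeChange l ∧
    (∀ t ∈ Set.Icc (0:ℝ) 1, |l t - t| ≤ ε) ∧
    (∀ t ∈ Set.Icc (0:ℝ) 1, |f (l t) - g t| ≤ ε)}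

/-- The induced metric on finite point configurations. -/
noncomputable def dX (x y : Finset ℝ) : ℝ := dD (countFn x) (countFn y)

/-- The sup product metric on `X² = X × X`. -/
noncomputable def dX2 (a b : Finset ℝ × Finset ℝ) : ℝ := max (dX a.1 b.1) (dX a.2 b.2)

/-- `φ^w(x¹,x²) = Σ_{u ∈ x¹} Σ_{v ∈ x²} w(u,v)`. -/
noncomputable def phiW (w : ℝ → ℝ → ℝ) (x : Finset ℝ × Finset ℝ) : ℝ :=
  ∑ u ∈ x.1, ∑ v ∈ x.2, w u v

/-! A time change `l` witnessing `d_X(x, y) < b ≤ 1` must match the integer-valued counting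
functions exactly, `N_x ∘ l = N_y`, and then `l` maps the points of `y` bijectively onto those of
`x` while moving each of them by less than `b`. So `φ^w(x)` is `φ^w(y)` with every
`w(v, v')` replaced by `w(l₁ v, l₂ v')`, and uniform continuity of `w` on `[0,1]²` bounds each of
the `#x¹ · #x²` differences. -/

open Filter Topology

theorem isTimeChange_id : IsTimeChange id :=
  ⟨strictMonoOn_id, continuousOn_id, image_id _⟩

namespace IsTimeChange

variable {l : ℝ → ℝ}

theorem mapsTo (hl : IsTimeChange l) : MapsTo l (Icc 0 1) (Icc 0 1) :=
  fun _ ht => hl.2.2 ▸ mem_image_of_mem l ht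

theorem map_zero (hl : IsTimeChange l) : l 0 = 0 := by
  have h0 : (0 : ℝ) ∈ Icc 0 1 := left_mem_Icc.2 zero_le_one
  obtain ⟨t, ht, hlt⟩ : (0 : ℝ) ∈ l '' Icc 0 1 := by rw [hl.2.2]; exact h0
  have := hl.1.monotoneOn h0 ht ht.1
  linarith [(hl.mapsTo h0).1]

theorem map_one (hl : IsTimeChange l) : l 1 = 1 := by
  have h1 : (1 : ℝ) ∈ Icc 0 1 := right_mem_Icc.2 zero_le_one
  obtain ⟨t, ht, hlt⟩ : (1 : ℝ) ∈ l '' Icc 0 1 := by rw [hl.2.2]; exact h1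
  have := hl.1.monotoneOn ht h1 ht.2
  linarith [(hl.mapsTo h1).2]

end IsTimeChange

section countFn

variable {x y : Finset ℝ}

theorem countFn_nonneg (x : Finset ℝ) (t : ℝ) : 0 ≤ countFn x t := Nat.cast_nonneg _

theorem countFn_le_card (x : Finset ℝ) (t : ℝ) : countFn x t ≤ x.card :=
  Nat.cast_le.2 (Finset.card_filter_le _ _)

theorem countFn_one (hx : ↑x ⊆ Icc (0 : ℝ) 1) : countFn x 1 = x.card := by
  rw [countFn, Finset.filter_true_of_mem fun u hu => (hx hu).2]

theorem countFn_of_neg (hx : ↑x ⊆ Icc (0 : ℝ) 1) {t : ℝ} (ht : t < 0) : countFn x t = 0 := by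
  rw [countFn, Finset.filter_false_of_mem fun u hu => not_le.2 (ht.trans_le (hx hu).1)]
  simp

theorem countFn_lt_of_mem {t v : ℝ} (hv : v ∈ x) (htv : t < v) : countFn x t < countFn x v := by
  refine Nat.cast_lt.2 (Finset.card_lt_card ⟨Finset.monotone_filter_right x
    fun _ _ hu => hu.trans htv.le, fun h => ?_⟩)
  exact htv.not_ge (Finset.mem_filter.1 (h (Finset.mem_filter.2 ⟨hv, le_rfl⟩))).2

theorem exists_lt_countFn_eq_of_notMem {s : ℝ} (hs : s ∉ x) :
    ∃ s' < s, countFn x s' = countFn x s := by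
  have hev : ∀ᶠ s' in 𝓝[<] s, s' < s ∧ ∀ u ∈ x, u < s → u < s' := by
    refine eventually_mem_nhdsWithin.and ((Filter.eventually_all_finset x).2 fun u _ => ?_)
    by_cases hu : u < s
    · exact ((eventually_gt_nhds hu).filter_mono nhdsWithin_le_nhds).mono fun _ h _ => h
    · exact Eventually.of_forall fun _ h => absurd h hu
  obtain ⟨s', hs's, hx's⟩ := hev.exists
  refine ⟨s', hs's, congrArg (fun n : ℕ => (n : ℝ)) (congrArg Finset.card ?_)⟩
  ext u
  simp only [Finset.mem_filter, and_congr_right_iff]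
  exact fun hu => ⟨fun h => h.trans hs's.le,
    fun h => (hx's u hu (h.lt_of_ne (ne_of_mem_of_not_mem hu hs))).le⟩

theorem countFn_eq_of_abs_sub_lt_one {s t : ℝ} (h : |countFn x s - countFn y t| < 1) :
    countFn x s = countFn y t := by
  unfold countFn at *
  generalize (x.filter (· ≤ s)).card = a at *
  generalize (y.filter (· ≤ t)).card = b at *
  obtain ⟨h₁, h₂⟩ := abs_sub_lt_iff.1 h
  have : a < b + 1 := by exact_mod_cast (by linarith : (a : ℝ) < b + 1)
  have : b < a + 1 := by exact_mod_cast (by linarith : (b : ℝ) < a + 1)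
  exact_mod_cast (by omega : a = b)

end countFn

section timeChange

variable {x y : Finset ℝ} {l : ℝ → ℝ}

theorem IsTimeChange.mapsTo_of_eqOn_countFn (hl : IsTimeChange l) (hx : ↑x ⊆ Icc (0 : ℝ) 1)
    (hy : ↑y ⊆ Icc (0 : ℝ) 1) (h : EqOn (countFn x ∘ l) (countFn y) (Icc 0 1)) :
    MapsTo l y x := by
  intro v hv
  by_contra hlv
  have hv01 := hy hv
  -- `N_x` is flat just left of `l v ∉ x`, while `N_y = N_x ∘ l` jumps at `v ∈ y`.
  obtain ⟨s, hs, hNs⟩ := exists_lt_countFn_eq_of_notMem hlv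
  have hNs_eq : countFn x s = countFn y v := hNs.trans (h hv01)
  rcases lt_or_ge s 0 with hs0 | hs0
  · have := countFn_lt_of_mem hv (sub_one_lt v)
    rw [countFn_of_neg hx hs0] at hNs_eq
    linarith [countFn_nonneg y (v - 1)]
  · obtain ⟨t, ht, hlt⟩ : s ∈ l '' Icc 0 v :=
      intermediate_value_Icc hv01.1 (hl.2.1.mono (Icc_subset_Icc_right hv01.2))
        ⟨by rwa [hl.map_zero], hs.le⟩
    have htv : t < v := ht.2.lt_of_ne (by rintro rfl; exact hs.ne hlt.symm)
    have hNt : countFn x s = countFn y t := hlt ▸ h ⟨ht.1, ht.2.trans hv01.2⟩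
    linarith [countFn_lt_of_mem hv htv]

theorem IsTimeChange.image_eq_of_eqOn_countFn (hl : IsTimeChange l) (hx : ↑x ⊆ Icc (0 : ℝ) 1)
    (hy : ↑y ⊆ Icc (0 : ℝ) 1) (h : EqOn (countFn x ∘ l) (countFn y) (Icc 0 1)) :
    y.image l = x := by
  refine Finset.eq_of_subset_of_card_le
    (Finset.image_subset_iff.2 (hl.mapsTo_of_eqOn_countFn hx hy h)) ?_
  have hcard : countFn x 1 = countFn y 1 := by
    simpa [hl.map_one] using h (right_mem_Icc.2 zero_le_one)
  rw [countFn_one hx, countFn_one hy, Nat.cast_inj] at hcard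
  rw [Finset.card_image_of_injOn (hl.1.injOn.mono hy), hcard]

theorem IsTimeChange.sum_comp_of_eqOn_countFn (hl : IsTimeChange l) (hx : ↑x ⊆ Icc (0 : ℝ) 1)
    (hy : ↑y ⊆ Icc (0 : ℝ) 1) (h : EqOn (countFn x ∘ l) (countFn y) (Icc 0 1)) (f : ℝ → ℝ) :
    ∑ u ∈ x, f u = ∑ v ∈ y, f (l v) := by
  rw [← hl.image_eq_of_eqOn_countFn hx hy h, Finset.sum_image (hl.1.injOn.mono hy)]

end timeChange

section phiW

variable (w : ℝ → ℝ → ℝ) {x y : Finset ℝ × Finset ℝ} {l₁ l₂ : ℝ → ℝ}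

theorem phiW_eq_sum_comp (hl₁ : IsTimeChange l₁) (hl₂ : IsTimeChange l₂)
    (hx₁ : ↑x.1 ⊆ Icc (0 : ℝ) 1) (hx₂ : ↑x.2 ⊆ Icc (0 : ℝ) 1)
    (hy₁ : ↑y.1 ⊆ Icc (0 : ℝ) 1) (hy₂ : ↑y.2 ⊆ Icc (0 : ℝ) 1)
    (h₁ : EqOn (countFn x.1 ∘ l₁) (countFn y.1) (Icc 0 1))
    (h₂ : EqOn (countFn x.2 ∘ l₂) (countFn y.2) (Icc 0 1)) :
    phiW w x = ∑ p ∈ y.1 ×ˢ y.2, w (l₁ p.1) (l₂ p.2) := by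
  simp_rw [phiW, Finset.sum_product, hl₁.sum_comp_of_eqOn_countFn hx₁ hy₁ h₁,
    hl₂.sum_comp_of_eqOn_countFn hx₂ hy₂ h₂]

theorem abs_phiW_sub_le (hl₁ : IsTimeChange l₁) (hl₂ : IsTimeChange l₂)
    (hx₁ : ↑x.1 ⊆ Icc (0 : ℝ) 1) (hx₂ : ↑x.2 ⊆ Icc (0 : ℝ) 1)
    (hy₁ : ↑y.1 ⊆ Icc (0 : ℝ) 1) (hy₂ : ↑y.2 ⊆ Icc (0 : ℝ) 1)
    (h₁ : EqOn (countFn x.1 ∘ l₁) (countFn y.1) (Icc 0 1))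
    (h₂ : EqOn (countFn x.2 ∘ l₂) (countFn y.2) (Icc 0 1)) {c : ℝ}
    (hw : ∀ p ∈ y.1 ×ˢ y.2, |w p.1 p.2 - w (l₁ p.1) (l₂ p.2)| ≤ c) :
    |phiW w y - phiW w x| ≤ (x.1.card * x.2.card : ℕ) * c := by
  have hcard : (y.1 ×ˢ y.2).card = x.1.card * x.2.card := by
    rw [Finset.card_product, ← Finset.card_image_of_injOn (hl₁.1.injOn.mono hy₁),
      ← Finset.card_image_of_injOn (hl₂.1.injOn.mono hy₂),
      hl₁.image_eq_of_eqOn_countFn hx₁ hy₁ h₁, hl₂.image_eq_of_eqOn_countFn hx₂ hy₂ h₂]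
  rw [phiW_eq_sum_comp w hl₁ hl₂ hx₁ hx₂ hy₁ hy₂ h₁ h₂, phiW, ← Finset.sum_product',
    ← Finset.sum_sub_distrib, ← hcard, ← nsmul_eq_mul, ← Finset.sum_const]
  exact (Finset.abs_sum_le_sum_abs _ _).trans (Finset.sum_le_sum hw)

end phiW

theorem dD_countFn_set_nonempty (x y : Finset ℝ) :
    {ε : ℝ | 0 < ε ∧ ∃ l : ℝ → ℝ, IsTimeChange l ∧
      (∀ t ∈ Icc (0 : ℝ) 1, |l t - t| ≤ ε) ∧
      (∀ t ∈ Icc (0 : ℝ) 1, |countFn x (l t) - countFn y t| ≤ ε)}.Nonempty := by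
  refine ⟨x.card + y.card + 1, by positivity, id, isTimeChange_id,
    fun t _ => by simp only [id, sub_self, abs_zero]; positivity, fun t _ => ?_⟩
  have := countFn_nonneg x t; have := countFn_nonneg y t
  have := countFn_le_card x t; have := countFn_le_card y t
  rw [id, abs_le]
  constructor <;> linarith

theorem exists_timeChange_of_dX_lt {x y : Finset ℝ} {b : ℝ} (hxy : dX x y < b) (hb : b ≤ 1) :
    ∃ l, IsTimeChange l ∧ (∀ t ∈ Icc (0 : ℝ) 1, |l t - t| < b) ∧
      EqOn (countFn x ∘ l) (countFn y) (Icc 0 1) := by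
  obtain ⟨a, ⟨-, l, hl, hla, hNa⟩, hab⟩ := exists_lt_of_csInf_lt (dD_countFn_set_nonempty x y) hxy
  exact ⟨l, hl, fun t ht => (hla t ht).trans_lt hab, fun t ht =>
    countFn_eq_of_abs_sub_lt_one ((hNa t ht).trans_lt (hab.trans_le hb))⟩

/-- If `w` is continuous on `[0,1]²`, then `φ^w` is continuous on `X²` for the product
metric `d_{X²}` (ε-η formulation at every point consisting of configurations in `[0,1]`). -/
theorem stmt_2 (w : ℝ → ℝ → ℝ)
    (hw : ContinuousOn (fun p : ℝ × ℝ => w p.1 p.2) (Set.Icc 0 1 ×ˢ Set.Icc 0 1))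
    (x : Finset ℝ × Finset ℝ)
    (hx1 : ∀ u ∈ x.1, u ∈ Set.Icc (0:ℝ) 1) (hx2 : ∀ v ∈ x.2, v ∈ Set.Icc (0:ℝ) 1) :
    ∀ ε > 0, ∃ η > 0, ∀ y : Finset ℝ × Finset ℝ,
      (∀ u ∈ y.1, u ∈ Set.Icc (0:ℝ) 1) → (∀ v ∈ y.2, v ∈ Set.Icc (0:ℝ) 1) →
      dX2 x y ≤ η → |phiW w y - phiW w x| ≤ ε := by
  intro ε hε
  set n : ℕ := x.1.card * x.2.card
  obtain ⟨δ, hδ, hwδ⟩ := Metric.uniformContinuousOn_iff_le.1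
    ((isCompact_Icc.prod isCompact_Icc).uniformContinuousOn_of_continuous hw)
    (ε / (n + 1)) (by positivity)
  refine ⟨min δ 1 / 2, by positivity, fun y hy1 hy2 hxy => ?_⟩
  have hclose {a b : Finset ℝ} (h : dX a b ≤ min δ 1 / 2) : dX a b < min δ 1 :=
    h.trans_lt (half_lt_self (by positivity))
  obtain ⟨l₁, hl₁, hl₁δ, h₁⟩ :=
    exists_timeChange_of_dX_lt (hclose ((le_max_left _ _).trans hxy)) (min_le_right _ _)
  obtain ⟨l₂, hl₂, hl₂δ, h₂⟩ :=
    exists_timeChange_of_dX_lt (hclose ((le_max_right _ _).trans hxy)) (min_le_right _ _)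
  have hterm : ∀ p ∈ y.1 ×ˢ y.2, |w p.1 p.2 - w (l₁ p.1) (l₂ p.2)| ≤ ε / (n + 1) := by
    rintro ⟨v, v'⟩ hp
    obtain ⟨hv, hv'⟩ := Finset.mem_product.1 hp
    refine (Real.dist_eq _ _).symm.trans_le (hwδ (v, v') ⟨hy1 v hv, hy2 v' hv'⟩ (l₁ v, l₂ v')
      ⟨hl₁.mapsTo (hy1 v hv), hl₂.mapsTo (hy2 v' hv')⟩ ?_)
    rw [Prod.dist_eq, Real.dist_eq, Real.dist_eq, abs_sub_comm v, abs_sub_comm v']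
    exact max_le ((hl₁δ v (hy1 v hv)).le.trans (min_le_left _ _))
      ((hl₂δ v' (hy2 v' hv')).le.trans (min_le_left _ _))
  calc |phiW w y - phiW w x| ≤ n * (ε / (n + 1)) :=
        abs_phiW_sub_le w hl₁ hl₂ hx1 hx2 hy1 hy2 h₁ h₂ hterm
    _ ≤ ε := by
      rw [mul_div_assoc', div_le_iff₀ (by positivity)]
      nlinarith
end

section
/- Define f(a,b) = (#a)(#b)(#a − #b) for finite point configurations a, b, and the symmetric kernel h((x¹,x²),(y¹,y²)) = f(x¹,y¹)·f(x²,y²) on X² × X². Then (i) for every n and every x₁,…,x_n ∈ X², the empirical centering identity Σ_{i₁,i₂,i₁',i₂'=1}^n h((x_{i₁}¹,x_{i₂}²),(x_{i₁'}¹,x_{i₂'}²)) = 0 holds, and (ii) there exists no function φ : X² → ℝ such that h = h_φ, where h_φ(x,y) = ½(φ(x¹,x²)+φ(y¹,y²)−φ(x¹,y²)−φ(y¹,x²)). -/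
/-!
Part (i): the quadruple sum factors as the product of the double sums of `f` over the first and
over the second coordinates, and a double sum of the antisymmetric `f` over a sample vanishes.

Part (ii): the rectangle differences `h_φ` are additive in the first coordinate, whereas
`f(a,b) + f(b,c) - f(a,c) = (#a-#b)(#b-#c)(#a-#c)`, which is nonzero for cardinalities `1, 2, 0`.
-/

/-- `f(a,b) = (#a)(#b)(#a − #b)`. -/
noncomputable def fker (a b : Finset ℝ) : ℝ :=
  (a.card : ℝ) * (b.card : ℝ) * ((a.card : ℝ) - (b.card : ℝ))

/-- The symmetric kernel `h((x¹,x²),(y¹,y²)) = f(x¹,y¹)·f(x²,y²)`. -/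
noncomputable def hker (x y : Finset ℝ × Finset ℝ) : ℝ := fker x.1 y.1 * fker x.2 y.2

/-- The linear-case kernel `h_φ` associated with a function `φ`. -/
noncomputable def hPhi (φ : Finset ℝ × Finset ℝ → ℝ) (x y : Finset ℝ × Finset ℝ) : ℝ :=
  (φ (x.1, x.2) + φ (y.1, y.2) - φ (x.1, y.2) - φ (y.1, x.2)) / 2

theorem Fintype.sum_sum_eq_zero_of_antisymm {ι M : Type*} [Fintype ι] [AddCommGroup M]
    [IsAddTorsionFree M] (f : ι → ι → M) (hf : ∀ i j, f j i = -f i j) :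
    ∑ i, ∑ j, f i j = 0 := by
  refine self_eq_neg.mp ?_
  calc ∑ i, ∑ j, f i j = ∑ j, ∑ i, f i j := Finset.sum_comm
    _ = -∑ i, ∑ j, f i j := by
        simp only [← Finset.sum_neg_distrib]
        exact Finset.sum_congr rfl fun j _ => Finset.sum_congr rfl fun i _ => hf j i

theorem fker_swap (a b : Finset ℝ) : fker b a = -fker a b := by
  unfold fker; ring

theorem fker_add_fker_sub_fker (a b c : Finset ℝ) :
    fker a b + fker b c - fker a c =
      ((a.card : ℝ) - b.card) * ((b.card : ℝ) - c.card) * ((a.card : ℝ) - c.card) := by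
  unfold fker; ring

theorem sum_hker_eq_zero {n : ℕ} (x : Fin n → Finset ℝ × Finset ℝ) :
    ∑ i1 : Fin n, ∑ i2 : Fin n, ∑ i1' : Fin n, ∑ i2' : Fin n,
      hker ((x i1).1, (x i2).2) ((x i1').1, (x i2').2) = 0 :=
  calc _ = (∑ i1, ∑ i1', fker (x i1).1 (x i1').1) * ∑ i2, ∑ i2', fker (x i2).2 (x i2').2 := by
        simp only [hker, Finset.sum_mul_sum]
    _ = 0 := by
        rw [Fintype.sum_sum_eq_zero_of_antisymm _ fun i j => fker_swap (x i).1 (x j).1, zero_mul]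

theorem hPhi_add_hPhi (φ : Finset ℝ × Finset ℝ → ℝ) (x₁ x₂ y₁ y₂ z₁ : Finset ℝ) :
    hPhi φ (x₁, x₂) (y₁, y₂) + hPhi φ (y₁, x₂) (z₁, y₂) = hPhi φ (x₁, x₂) (z₁, y₂) := by
  unfold hPhi; ring

theorem hker_add_hker_sub_hker (x₁ x₂ y₁ y₂ z₁ : Finset ℝ) :
    hker (x₁, x₂) (y₁, y₂) + hker (y₁, x₂) (z₁, y₂) - hker (x₁, x₂) (z₁, y₂) =
      fker x₂ y₂ * (((x₁.card : ℝ) - y₁.card) * ((y₁.card : ℝ) - z₁.card) *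
        ((x₁.card : ℝ) - z₁.card)) := by
  rw [← fker_add_fker_sub_fker]; unfold hker; ring

theorem not_exists_hker_eq_hPhi :
    ¬ ∃ φ : Finset ℝ × Finset ℝ → ℝ, ∀ x y, hker x y = hPhi φ x y := by
  rintro ⟨φ, hφ⟩
  obtain ⟨s₀, hs₀⟩ := Infinite.exists_subset_card_eq ℝ 0
  obtain ⟨s₁, hs₁⟩ := Infinite.exists_subset_card_eq ℝ 1
  obtain ⟨s₂, hs₂⟩ := Infinite.exists_subset_card_eq ℝ 2
  have hadd := hker_add_hker_sub_hker s₁ s₁ s₂ s₂ s₀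
  simp only [hφ, hPhi_add_hPhi, sub_self, fker, hs₀, hs₁, hs₂] at hadd
  norm_num at hadd

/-- (i) `hker` satisfies the empirical centering identity for every finite sample, and
(ii) there is no `φ` such that `hker = h_φ`. -/
theorem stmt_7 :
    (∀ (n : ℕ) (x : Fin n → Finset ℝ × Finset ℝ),
      (∑ i1 : Fin n, ∑ i2 : Fin n, ∑ i1' : Fin n, ∑ i2' : Fin n,
        hker ((x i1).1, (x i2).2) ((x i1').1, (x i2').2)) = 0) ∧
    ¬ ∃ φ : Finset ℝ × Finset ℝ → ℝ, ∀ x y : Finset ℝ × Finset ℝ, hker x y = hPhi φ x y :=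
  ⟨fun _ x => sum_hker_eq_zero x, not_exists_hker_eq_hPhi⟩
end

section
/- Let X₁,…,X_n be i.i.d. pairs with distribution P on X², let φ : X² → ℝ be integrable, and let Π_n be a uniformly random permutation of {1,…,n} independent of the sample. Define C_{i,j} = φ(X_i¹,X_j²) − E[φ(X_i¹,X²)|X_i¹] − E[φ(X¹,X_j²)|X_j²] + E[φ(X¹,X²)] where (X¹,X²) ~ P¹⊗P² independent of the sample, and for the kernel h_φ the permuted U-statistic U_n(X_n^{Π_n}) with X_i^{Π_n} = (X_i¹, X_{Π_n(i)}²). Then the exact decomposition √n·U_n(X_n^{Π_n}) = (n/(n−1))·( M_n^{Π_n} + R_n^{Π_n}/√n − T_n/√n ) holds, where M_n^{Π_n} = (1/√n) Σ_{i≠j} 1{Π_n(i)=j} C_{i,j}, R_n^{Π_n} = Σ_{i=1}^n (1{Π_n(i)=i} − 1/n) C_{i,i}, and T_n = (1/n) Σ_{i≠j} C_{i,j}. -/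
/-!
The symmetrised kernel `h_φ(p, q) = (φ(p¹,p²) + φ(q¹,q²) − φ(p¹,q²) − φ(q¹,p²)) / 2` does not see
terms of `φ` that depend on one coordinate only, so `φ` may be replaced by its doubly centred
version `ψ(u, v) = φ(u, v) − a(u) − b(v) + m`, for which `ψ(X_i¹, X_j²) = C_{i,j}`. Summing the
kernel over the off-diagonal pairs of the permuted sample then gives
`n(n−1) U_n = n Σ_i C_{i,π(i)} − Σ_{i,j} C_{i,j}`, while `√n M + R − T` telescopes to
`Σ_i C_{i,π(i)} − (1/n) Σ_{i,j} C_{i,j}`.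
-/

open Finset MeasureTheory

section

variable {ι : Type*} [Fintype ι] [DecidableEq ι]

theorem Finset.sum_filter_ne_eq_sum_sub_sum_diag {M : Type*} [AddCommGroup M]
    (F : ι × ι → M) :
    ∑ p ∈ univ.filter (fun p : ι × ι => p.1 ≠ p.2), F p
      = ∑ i, ∑ j, F (i, j) - ∑ i, F (i, i) := by
  rw [sum_filter, Fintype.sum_prod_type, ← sum_sub_distrib]
  refine sum_congr rfl fun i _ => ?_
  rw [← sum_filter, filter_ne, sum_erase_eq_sub (mem_univ i)]

theorem Finset.sum_filter_ne_ite_perm_mul {R : Type*} [NonAssocRing R]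
    (π : Equiv.Perm ι) (C : ι → ι → R) :
    ∑ p ∈ univ.filter (fun p : ι × ι => p.1 ≠ p.2), (if π p.1 = p.2 then (1 : R) else 0) * C p.1 p.2
      = ∑ i, C i (π i) - ∑ i, (if π i = i then (1 : R) else 0) * C i i := by
  rw [sum_filter_ne_eq_sum_sub_sum_diag]
  congr 1
  refine sum_congr rfl fun i _ => ?_
  simp

def uStatKernel {α β K : Type*} [DivisionRing K] (φ : α → β → K) (p q : α × β) : K :=
  (φ p.1 p.2 + φ q.1 q.2 - φ p.1 q.2 - φ q.1 p.2) / 2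

theorem uStatKernel_sub_sub_add {α β K : Type*} [Field K] (φ : α → β → K) (a : α → K)
    (b : β → K) (m : K) :
    uStatKernel (fun u v => φ u v - a u - b v + m) = uStatKernel φ := by
  ext p q
  simp only [uStatKernel]
  ring

theorem sum_filter_ne_uStatKernel_perm {α β K : Type*} [Field K] [CharZero K]
    (ψ : α → β → K) (f : ι → α) (g : ι → β) (π : Equiv.Perm ι) :
    ∑ p ∈ univ.filter (fun p : ι × ι => p.1 ≠ p.2),
        uStatKernel ψ (f p.1, g (π p.1)) (f p.2, g (π p.2))
      = Fintype.card ι * ∑ i, ψ (f i) (g (π i)) - ∑ i, ∑ j, ψ (f i) (g j) := by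
  rw [sum_filter_ne_eq_sum_sub_sum_diag]
  have hdiag : ∀ i, uStatKernel ψ (f i, g (π i)) (f i, g (π i)) = 0 := fun i => by
    simp [uStatKernel]
  have hcross : ∑ i, ∑ j, ψ (f j) (g (π i)) = ∑ i, ∑ j, ψ (f i) (g j) := by
    rw [Equiv.sum_comp π fun i => ∑ j, ψ (f j) (g i), sum_comm]
  have hcross' : ∑ i, ∑ j, ψ (f i) (g (π j)) = ∑ i, ∑ j, ψ (f i) (g j) :=
    sum_congr rfl fun i _ => Equiv.sum_comp π fun j => ψ (f i) (g j)
  simp only [hdiag, sum_const_zero, sub_zero]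
  simp only [uStatKernel, ← sum_div, sum_sub_distrib,
    sum_add_distrib, sum_const, card_univ, nsmul_eq_mul, hcross, hcross', ← mul_sum]
  ring

end

/-- The exact permutation decomposition: for any sample values, any permutation `π`, and
the centered quantities `C_{i,j} = φ(X_i¹,X_j²) − E[φ(X_i¹,X²)|X_i¹] − E[φ(X¹,X_j²)|X_j²]
+ E[φ(X¹,X²)]` (with `(X¹,X²) ~ P¹⊗P²`),
`√n·U_n(Xₙ^π) = (n/(n−1))(M_n^π + R_n^π/√n − T_n/√n)`. -/
theorem stmt_15 {E : Type*} [MeasurableSpace E]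
    (P1 P2 : Measure E) (φ : E → E → ℝ)
    (n : ℕ) (hn : 2 ≤ n) (x : Fin n → E × E) (π : Equiv.Perm (Fin n)) :
    let a : E → ℝ := fun u => ∫ v, φ u v ∂P2
    let b : E → ℝ := fun v => ∫ u, φ u v ∂P1
    let m : ℝ := ∫ u, ∫ v, φ u v ∂P2 ∂P1
    let C : Fin n → Fin n → ℝ := fun i j => φ (x i).1 (x j).2 - a (x i).1 - b (x j).2 + m
    let hφ : E × E → E × E → ℝ := fun p q =>
      (φ p.1 p.2 + φ q.1 q.2 - φ p.1 q.2 - φ q.1 p.2) / 2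
    let Uperm : ℝ := (1 / ((n : ℝ) * ((n : ℝ) - 1))) *
      ∑ p ∈ Finset.univ.filter (fun p : Fin n × Fin n => p.1 ≠ p.2),
        hφ ((x p.1).1, (x (π p.1)).2) ((x p.2).1, (x (π p.2)).2)
    let M : ℝ := (1 / Real.sqrt n) *
      ∑ p ∈ Finset.univ.filter (fun p : Fin n × Fin n => p.1 ≠ p.2),
        (if π p.1 = p.2 then (1 : ℝ) else 0) * C p.1 p.2
    let R : ℝ := ∑ i : Fin n, ((if π i = i then (1 : ℝ) else 0) - 1 / (n : ℝ)) * C i i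
    let T : ℝ := (1 / (n : ℝ)) *
      ∑ p ∈ Finset.univ.filter (fun p : Fin n × Fin n => p.1 ≠ p.2), C p.1 p.2
    Real.sqrt n * Uperm
      = ((n : ℝ) / ((n : ℝ) - 1)) * (M + R / Real.sqrt n - T / Real.sqrt n) := by
  intro a b m C hφ Uperm M R T
  have hU : Uperm = (n * ∑ i, C i (π i) - ∑ i, ∑ j, C i j) / (n * (n - 1)) := by
    have h := sum_filter_ne_uStatKernel_perm (fun u v => φ u v - a u - b v + m)
      (fun i => (x i).1) (fun i => (x i).2) π
    have hker : hφ = uStatKernel (fun u v => φ u v - a u - b v + m) :=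
      (uStatKernel_sub_sub_add φ a b m).symm
    rw [Fintype.card_fin] at h
    simp only [Uperm, hker, h]
    ring
  have hR : R = ∑ i, (if π i = i then (1 : ℝ) else 0) * C i i - (1 / n) * ∑ i, C i i := by
    simp only [R, sub_mul, sum_sub_distrib, ← mul_sum]
  have hT : T = (1 / n) * (∑ i, ∑ j, C i j - ∑ i, C i i) := by
    simp only [T, sum_filter_ne_eq_sum_sub_sum_diag fun p => C p.1 p.2]
  have hn0 : (n : ℝ) ≠ 0 := by positivity
  have hn1 : (n : ℝ) - 1 ≠ 0 := by
    have : (2 : ℝ) ≤ n := by exact_mod_cast hn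
    linarith
  have hs : Real.sqrt n ^ 2 = n := Real.sq_sqrt n.cast_nonneg
  have hs0 : Real.sqrt n ≠ 0 := by positivity
  simp only [M, sum_filter_ne_ite_perm_mul, hU, hR, hT]
  field_simp
  rw [hs]
  ring
end

section
/- With the notation of the permutation decomposition (Π_n uniform on S_n independent of the i.i.d. sample, C_{i,i} as defined, R_n^{Π_n} = Σ_{i=1}^n (1{Π_n(i)=i} − 1/n) C_{i,i}), assume E_P[φ²] < ∞ and E_{P¹⊗P²}[φ²] < ∞. Then there is an absolute constant C > 0 with E[(R_n^{Π_n})²] ≤ C (E_P[φ²] + E_{P¹⊗P²}[φ²]) for all n ≥ 2. Key ingredients: for a uniformly random permutation Π_n, P(Π_n(i)=i) = 1/n and, for i ≠ j, P(Π_n(i)=i, Π_n(j)=j) = 1/(n(n−1)), so that E[(1{Π_n(i)=i}−1/n)(1{Π_n(j)=j}−1/n)] = 1/n − 1/n² for i = j and 1/(n(n−1)) − 1/n² for i ≠ j. -/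
/-!
Write `g = doublyCentered P.fst P.snd (uncurry φ)`, so that the paper's `C_{i,i}` is `g (X i)` and
`R = ∑ i, c i * g (X i)` with `c i = 1{π i = i} - 1/n`. The weighted Cauchy–Schwarz inequality
`R² ≤ (∑ |c i|) * ∑ |c i| * g (X i)²` together with `∑ |c i| ≤ F π + 1`, where `F π` is the number
of fixed points of `π`, gives `E[R² | π] ≤ (F π + 1)² E_P[g²]` without any use of independence.
Counting permutations that fix one or two given points gives `E[F] = 1` and `E[F²] = 2`, hence the
factor `5` after averaging over `π`. Finally Jensen's inequality on the sections of `φ` bounds the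
squared marginal integrals, so `E_P[g²] ≤ 4 E_P[φ²] + 12 E_{P¹⊗P²}[φ²]`.
-/

open MeasureTheory Finset

namespace Equiv.Perm

open scoped Nat

variable {α : Type*} [Fintype α] [DecidableEq α]

theorem card_filter_forall_mem_apply_eq_self (s : Finset α) :
    #{σ : Perm α | ∀ a ∈ s, σ a = a} = (Fintype.card α - #s)! := by
  rw [← Fintype.card_subtype, Fintype.card_congr ((Equiv.subtypeEquivRight fun σ => by
      simp only [not_not]).trans (Perm.subtypeEquivSubtypePerm (· ∉ s)).symm),
    Fintype.card_perm, Fintype.card_subtype_compl, Fintype.card_coe]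

theorem card_filter_apply_eq_self (a : α) :
    #{σ : Perm α | σ a = a} = (Fintype.card α - 1)! := by
  simpa using card_filter_forall_mem_apply_eq_self {a}

theorem card_filter_apply_eq_self_and_apply_eq_self {a b : α} (hab : a ≠ b) :
    #{σ : Perm α | σ a = a ∧ σ b = b} = (Fintype.card α - 2)! := by
  simpa [hab] using card_filter_forall_mem_apply_eq_self {a, b}

theorem sum_card_fixedPoints [Nonempty α] :
    ∑ σ : Perm α, #{a | σ a = a} = (Fintype.card α)! := by
  simp_rw [card_filter]
  rw [sum_comm]
  simp_rw [← card_filter, card_filter_apply_eq_self]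
  rw [sum_const, card_univ, smul_eq_mul, Nat.mul_factorial_pred Fintype.card_ne_zero]

theorem sum_card_fixedPoints_sq (h2 : 2 ≤ Fintype.card α) :
    ∑ σ : Perm α, #{a | σ a = a} ^ 2 = 2 * (Fintype.card α)! := by
  have fix_pair (a : α) :
      ∑ b, #{σ : Perm α | σ a = a ∧ σ b = b} = 2 * (Fintype.card α - 1)! := by
    rw [← add_sum_erase _ _ (mem_univ a), sum_congr rfl fun b hb =>
      card_filter_apply_eq_self_and_apply_eq_self (ne_of_mem_erase hb).symm]
    simp only [and_self, card_filter_apply_eq_self, sum_const, card_erase_of_mem (mem_univ a),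
      card_univ, smul_eq_mul]
    have := Nat.mul_factorial_pred (n := Fintype.card α - 1) (by omega)
    rw [show Fintype.card α - 1 - 1 = Fintype.card α - 2 by omega] at this
    omega
  calc ∑ σ : Perm α, #{a | σ a = a} ^ 2 = ∑ a, ∑ b, #{σ : Perm α | σ a = a ∧ σ b = b} := by
        simp_rw [sq, card_filter, sum_mul_sum, ite_zero_mul_ite_zero, mul_one]
        rw [sum_comm]
        exact sum_congr rfl fun a _ => sum_comm
    _ = 2 * (Fintype.card α)! := by
        rw [sum_congr rfl fun a _ => fix_pair a, sum_const, card_univ, smul_eq_mul,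
          mul_left_comm, Nat.mul_factorial_pred (by omega)]

theorem inv_factorial_mul_card_filter_apply_eq_self (a : α) :
    ((Fintype.card α)! : ℝ)⁻¹ * #{σ : Perm α | σ a = a} = 1 / Fintype.card α := by
  have hn : Fintype.card α ≠ 0 := (Fintype.card_pos_iff.2 ⟨a⟩).ne'
  rw [card_filter_apply_eq_self, ← Nat.mul_factorial_pred hn]
  have : ((Fintype.card α - 1)! : ℝ) ≠ 0 := by positivity
  push_cast
  field_simp

theorem inv_factorial_mul_card_filter_apply_eq_self_and_apply_eq_self {a b : α} (hab : a ≠ b) :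
    ((Fintype.card α)! : ℝ)⁻¹ * #{σ : Perm α | σ a = a ∧ σ b = b}
      = 1 / (Fintype.card α * (Fintype.card α - 1)) := by
  have h2 : 2 ≤ Fintype.card α := Fintype.one_lt_card_iff.2 ⟨a, b, hab⟩
  have hfact :
      (Fintype.card α)! = Fintype.card α * ((Fintype.card α - 1) * (Fintype.card α - 2)!) := by
    rw [show Fintype.card α - 2 = Fintype.card α - 1 - 1 by omega,
      Nat.mul_factorial_pred (by omega), Nat.mul_factorial_pred (by omega)]
  have : ((Fintype.card α - 2)! : ℝ) ≠ 0 := by positivity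
  have : (Fintype.card α : ℝ) - 1 ≠ 0 := by
    rw [sub_ne_zero]; exact_mod_cast (by omega : Fintype.card α ≠ 1)
  rw [card_filter_apply_eq_self_and_apply_eq_self hab, hfact]
  push_cast [Nat.cast_sub (by omega : 1 ≤ Fintype.card α)]
  field_simp

theorem sum_sq_card_fixedPoints_add_one (h2 : 2 ≤ Fintype.card α) :
    ∑ σ : Perm α, ((#{a | σ a = a} : ℝ) + 1) ^ 2 = 5 * ((Fintype.card α)! : ℝ) := by
  have : Nonempty α := Fintype.card_pos_iff.1 (by omega)
  have hsq : ∑ σ : Perm α, (#{a | σ a = a} : ℝ) ^ 2 = 2 * (Fintype.card α)! := by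
    exact_mod_cast sum_card_fixedPoints_sq h2
  have hlin : ∑ σ : Perm α, (#{a | σ a = a} : ℝ) = (Fintype.card α)! := by
    exact_mod_cast sum_card_fixedPoints
  simp only [add_sq, sum_add_distrib, ← sum_mul, ← mul_sum, hsq, hlin, sum_const, card_univ,
    Fintype.card_perm]
  ring

end Equiv.Perm

theorem sq_integral_le_integral_sq {Ω : Type*} [MeasurableSpace Ω] {μ : Measure Ω}
    [IsProbabilityMeasure μ] {f : Ω → ℝ} (hf : AEStronglyMeasurable f μ)
    (hf2 : Integrable (fun x => f x ^ 2) μ) : (∫ x, f x ∂μ) ^ 2 ≤ ∫ x, f x ^ 2 ∂μ := by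
  have := ProbabilityTheory.variance_nonneg f μ
  rw [ProbabilityTheory.variance_eq_sub ((memLp_two_iff_integrable_sq hf).2 hf2)] at this
  simpa using this

section Prod

variable {α β : Type*} [MeasurableSpace α] [MeasurableSpace β] {μ : Measure α} {ν : Measure β}
  {f : α × β → ℝ}

section Right

variable [SFinite μ] [IsProbabilityMeasure ν]

theorem ae_sq_integral_prod_right_le (hf : AEStronglyMeasurable f (μ.prod ν))
    (hf2 : Integrable (fun p => f p ^ 2) (μ.prod ν)) :
    ∀ᵐ x ∂μ, (∫ y, f (x, y) ∂ν) ^ 2 ≤ ∫ y, f (x, y) ^ 2 ∂ν := by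
  filter_upwards [hf.prodMk_left, hf2.prod_right_ae] with x hx hx2
  exact sq_integral_le_integral_sq hx hx2

theorem integrable_sq_integral_prod_right (hf : AEStronglyMeasurable f (μ.prod ν))
    (hf2 : Integrable (fun p => f p ^ 2) (μ.prod ν)) :
    Integrable (fun x => (∫ y, f (x, y) ∂ν) ^ 2) μ := by
  refine hf2.integral_prod_left.mono' (hf.integral_prod_right'.pow 2) ?_
  filter_upwards [ae_sq_integral_prod_right_le hf hf2] with x hx
  rwa [Real.norm_of_nonneg (sq_nonneg _)]

theorem integral_sq_integral_prod_right_le (hf : AEStronglyMeasurable f (μ.prod ν))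
    (hf2 : Integrable (fun p => f p ^ 2) (μ.prod ν)) :
    ∫ x, (∫ y, f (x, y) ∂ν) ^ 2 ∂μ ≤ ∫ p, f p ^ 2 ∂(μ.prod ν) := by
  rw [integral_prod _ hf2]
  exact integral_mono_ae (integrable_sq_integral_prod_right hf hf2) hf2.integral_prod_left
    (ae_sq_integral_prod_right_le hf hf2)

end Right

section Left

variable [IsProbabilityMeasure μ] [SFinite ν]

theorem integrable_sq_integral_prod_left (hf : AEStronglyMeasurable f (μ.prod ν))
    (hf2 : Integrable (fun p => f p ^ 2) (μ.prod ν)) :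
    Integrable (fun y => (∫ x, f (x, y) ∂μ) ^ 2) ν :=
  integrable_sq_integral_prod_right (f := fun z => f z.swap) hf.prod_swap hf2.swap

theorem integral_sq_integral_prod_left_le (hf : AEStronglyMeasurable f (μ.prod ν))
    (hf2 : Integrable (fun p => f p ^ 2) (μ.prod ν)) :
    ∫ y, (∫ x, f (x, y) ∂μ) ^ 2 ∂ν ≤ ∫ p, f p ^ 2 ∂(μ.prod ν) :=
  (integral_sq_integral_prod_right_le (f := fun z => f z.swap) hf.prod_swap hf2.swap).trans_eq
    (integral_prod_swap fun p => f p ^ 2)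

end Left

noncomputable def doublyCentered (μ : Measure α) (ν : Measure β) (f : α × β → ℝ) (p : α × β) :
    ℝ :=
  f p - ∫ y, f (p.1, y) ∂ν - ∫ x, f (x, p.2) ∂μ + ∫ q, f q ∂(μ.prod ν)

theorem sq_doublyCentered_le (p : α × β) :
    doublyCentered μ ν f p ^ 2 ≤ 4 * (f p ^ 2 + (∫ y, f (p.1, y) ∂ν) ^ 2
      + (∫ x, f (x, p.2) ∂μ) ^ 2 + (∫ q, f q ∂(μ.prod ν)) ^ 2) := by
  unfold doublyCentered
  set a := ∫ y, f (p.1, y) ∂ν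
  set b := ∫ x, f (x, p.2) ∂μ
  set m := ∫ q, f q ∂(μ.prod ν)
  nlinarith [sq_nonneg (f p + a), sq_nonneg (f p + b), sq_nonneg (f p - m), sq_nonneg (a - b),
    sq_nonneg (a + m), sq_nonneg (b + m)]

theorem Measurable.doublyCentered [SFinite μ] [SFinite ν] (hf : Measurable f) :
    Measurable (doublyCentered μ ν f) :=
  ((hf.sub (hf.stronglyMeasurable.integral_prod_right'.measurable.comp measurable_fst)).sub
    (hf.stronglyMeasurable.integral_prod_left'.measurable.comp measurable_snd)).add_const _

variable {ρ : Measure (α × β)} [IsProbabilityMeasure ρ]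

theorem integrable_sq_doublyCentered (hf : Measurable f) (hρ : Integrable (fun p => f p ^ 2) ρ)
    (hprod : Integrable (fun p => f p ^ 2) (ρ.fst.prod ρ.snd)) :
    Integrable (fun p => doublyCentered ρ.fst ρ.snd f p ^ 2) ρ := by
  have ha := (integrable_sq_integral_prod_right hf.aestronglyMeasurable hprod).comp_measurable
    measurable_fst
  have hb := (integrable_sq_integral_prod_left hf.aestronglyMeasurable hprod).comp_measurable
    measurable_snd
  refine Integrable.mono' ((((hρ.add ha).add hb).add (integrable_const
    ((∫ q, f q ∂(ρ.fst.prod ρ.snd)) ^ 2))).const_mul 4)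
    (hf.doublyCentered.pow_const 2).aestronglyMeasurable (.of_forall fun p => ?_)
  rw [Real.norm_of_nonneg (sq_nonneg _)]
  exact sq_doublyCentered_le p

theorem integral_sq_doublyCentered_le (hf : Measurable f) (hρ : Integrable (fun p => f p ^ 2) ρ)
    (hprod : Integrable (fun p => f p ^ 2) (ρ.fst.prod ρ.snd)) :
    ∫ p, doublyCentered ρ.fst ρ.snd f p ^ 2 ∂ρ
      ≤ 4 * ∫ p, f p ^ 2 ∂ρ + 12 * ∫ p, f p ^ 2 ∂(ρ.fst.prod ρ.snd) := by
  have ha := integrable_sq_integral_prod_right hf.aestronglyMeasurable hprod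
  have hb := integrable_sq_integral_prod_left hf.aestronglyMeasurable hprod
  have ha' : Integrable (fun p : α × β => (∫ y, f (p.1, y) ∂ρ.snd) ^ 2) ρ :=
    ha.comp_measurable measurable_fst
  have hb' : Integrable (fun p : α × β => (∫ x, f (x, p.2) ∂ρ.fst) ^ 2) ρ :=
    hb.comp_measurable measurable_snd
  have ha_le : ∫ p, (∫ y, f (p.1, y) ∂ρ.snd) ^ 2 ∂ρ ≤ ∫ p, f p ^ 2 ∂(ρ.fst.prod ρ.snd) :=
    (integral_map measurable_fst.aemeasurable ha.aestronglyMeasurable).symm.trans_le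
      (integral_sq_integral_prod_right_le hf.aestronglyMeasurable hprod)
  have hb_le : ∫ p, (∫ x, f (x, p.2) ∂ρ.fst) ^ 2 ∂ρ ≤ ∫ p, f p ^ 2 ∂(ρ.fst.prod ρ.snd) :=
    (integral_map measurable_snd.aemeasurable hb.aestronglyMeasurable).symm.trans_le
      (integral_sq_integral_prod_left_le hf.aestronglyMeasurable hprod)
  have hm_le := sq_integral_le_integral_sq hf.aestronglyMeasurable hprod
  calc ∫ p, doublyCentered ρ.fst ρ.snd f p ^ 2 ∂ρ
      ≤ ∫ p, 4 * (f p ^ 2 + (∫ y, f (p.1, y) ∂ρ.snd) ^ 2 + (∫ x, f (x, p.2) ∂ρ.fst) ^ 2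
          + (∫ q, f q ∂(ρ.fst.prod ρ.snd)) ^ 2) ∂ρ :=
        integral_mono (integrable_sq_doublyCentered hf hρ hprod)
          ((((hρ.add ha').add hb').add (integrable_const _)).const_mul 4) sq_doublyCentered_le
    _ = 4 * (∫ p, f p ^ 2 ∂ρ + ∫ p, (∫ y, f (p.1, y) ∂ρ.snd) ^ 2 ∂ρ
          + ∫ p, (∫ x, f (x, p.2) ∂ρ.fst) ^ 2 ∂ρ + (∫ q, f q ∂(ρ.fst.prod ρ.snd)) ^ 2) := by
        rw [integral_const_mul, integral_add ?_ (integrable_const _), integral_add ?_ hb',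
          integral_add hρ ha', integral_const, probReal_univ, one_smul]
        exacts [hρ.add ha', (hρ.add ha').add hb']
    _ ≤ 4 * ∫ p, f p ^ 2 ∂ρ + 12 * ∫ p, f p ^ 2 ∂(ρ.fst.prod ρ.snd) := by linarith

end Prod

theorem sq_sum_mul_le_sum_abs_mul_sum_abs_mul_sq {ι : Type*} (s : Finset ι) (c d : ι → ℝ) :
    (∑ i ∈ s, c i * d i) ^ 2 ≤ (∑ i ∈ s, |c i|) * ∑ i ∈ s, |c i| * d i ^ 2 :=
  calc (∑ i ∈ s, c i * d i) ^ 2 ≤ (∑ i ∈ s, |c i * d i|) ^ 2 := by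
        rw [← sq_abs]
        exact pow_le_pow_left₀ (abs_nonneg _) (abs_sum_le_sum_abs _ _) 2
    _ ≤ _ := sum_sq_le_sum_mul_sum_of_sq_le_mul _ (fun i _ => abs_nonneg _)
        (fun i _ => by positivity) (fun i _ => by rw [abs_mul, mul_pow, sq_abs (d i)]; nlinarith)

theorem integral_sq_sum_mul_comp_eval_le {ι X : Type*} [Fintype ι] [MeasurableSpace X]
    {μ : Measure X} [IsProbabilityMeasure μ] (c : ι → ℝ) {h : X → ℝ}
    (hh : Integrable (fun x => h x ^ 2) μ) :
    ∫ x : ι → X, (∑ i, c i * h (x i)) ^ 2 ∂Measure.pi (fun _ => μ)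
      ≤ (∑ i, |c i|) ^ 2 * ∫ x, h x ^ 2 ∂μ := by
  have hint (i : ι) : Integrable (fun x : ι → X => |c i| * h (x i) ^ 2) (Measure.pi fun _ => μ) :=
    (integrable_comp_eval (μ := fun _ => μ) (i := i) hh).const_mul _
  calc ∫ x : ι → X, (∑ i, c i * h (x i)) ^ 2 ∂Measure.pi (fun _ => μ)
      ≤ ∫ x : ι → X, (∑ i, |c i|) * ∑ i, |c i| * h (x i) ^ 2 ∂Measure.pi (fun _ => μ) :=
        integral_mono_of_nonneg (.of_forall fun _ => sq_nonneg _)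
          ((integrable_finsetSum _ fun i _ => hint i).const_mul _)
          (.of_forall fun x => sq_sum_mul_le_sum_abs_mul_sum_abs_mul_sq _ _ _)
    _ = (∑ i, |c i|) ^ 2 * ∫ x, h x ^ 2 ∂μ := by
        simp_rw [integral_const_mul, integral_finsetSum _ fun i _ => hint i, integral_const_mul,
          integral_comp_eval (μ := fun _ => μ) hh.aestronglyMeasurable, ← sum_mul]
        ring

theorem sum_abs_ite_sub_one_div_card_le {ι : Type*} [Fintype ι] (p : ι → Prop) [DecidablePred p] :
    ∑ i, |(if p i then 1 else 0) - 1 / (Fintype.card ι : ℝ)| ≤ #{i | p i} + 1 :=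
  calc ∑ i, |(if p i then 1 else 0) - 1 / (Fintype.card ι : ℝ)|
      ≤ ∑ i, ((if p i then 1 else 0) + 1 / (Fintype.card ι : ℝ)) :=
        sum_le_sum fun i _ => (abs_sub _ _).trans (by split_ifs <;> simp)
    _ ≤ #{i | p i} + 1 := by
        rw [sum_add_distrib, sum_boole, sum_const, card_univ, nsmul_eq_mul, mul_one_div]
        gcongr
        exact div_self_le_one _

theorem average_integral_sq_sum_centered_fixedPoint_mul_le {α X : Type*} [Fintype α] [DecidableEq α]
    (h2 : 2 ≤ Fintype.card α) [MeasurableSpace X] {μ : Measure X} [IsProbabilityMeasure μ]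
    {h : X → ℝ} (hh : Integrable (fun x => h x ^ 2) μ) :
    ((Fintype.card α).factorial : ℝ)⁻¹ * ∑ σ : Equiv.Perm α, ∫ x : α → X,
        (∑ a, ((if σ a = a then 1 else 0) - 1 / (Fintype.card α : ℝ)) * h (x a)) ^ 2
          ∂Measure.pi (fun _ => μ)
      ≤ 5 * ∫ x, h x ^ 2 ∂μ := by
  have hh0 : 0 ≤ ∫ x, h x ^ 2 ∂μ := integral_nonneg fun _ => sq_nonneg _
  calc _ ≤ ((Fintype.card α).factorial : ℝ)⁻¹ * ∑ σ : Equiv.Perm α,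
          ((#{a | σ a = a} : ℝ) + 1) ^ 2 * ∫ x, h x ^ 2 ∂μ := by
        gcongr with σ
        refine (integral_sq_sum_mul_comp_eval_le _ hh).trans ?_
        gcongr
        exact sum_abs_ite_sub_one_div_card_le _
    _ = 5 * ∫ x, h x ^ 2 ∂μ := by
        rw [← sum_mul, Equiv.Perm.sum_sq_card_fixedPoints_add_one h2]
        field_simp

/-- There is an absolute constant `C > 0` such that `E[(R_n^{Π_n})²] ≤ C(E_P[φ²] +
E_{P¹⊗P²}[φ²])` for all `n ≥ 2` (expectation over the uniform permutation and the i.i.d.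
sample); moreover the key uniform-permutation facts hold: `P(Π_n(i)=i) = 1/n` and, for
`i ≠ j`, `P(Π_n(i)=i, Π_n(j)=j) = 1/(n(n−1))`. -/
theorem stmt_16 :
    (∃ C : ℝ, 0 < C ∧
      ∀ (E : Type) [MeasurableSpace E] (P : Measure (E × E)),
        IsProbabilityMeasure P →
        ∀ φ : E → E → ℝ, Measurable (fun p : E × E => φ p.1 p.2) →
        Integrable (fun p : E × E => (φ p.1 p.2) ^ 2) P →
        Integrable (fun p : E × E => (φ p.1 p.2) ^ 2) (P.fst.prod P.snd) →
        ∀ n : ℕ, 2 ≤ n →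
          (let a : E → ℝ := fun u => ∫ v, φ u v ∂P.snd
           let b : E → ℝ := fun v => ∫ u, φ u v ∂P.fst
           let m : ℝ := ∫ p, φ p.1 p.2 ∂(P.fst.prod P.snd)
           let R : (Fin n → E × E) → Equiv.Perm (Fin n) → ℝ := fun x π =>
             ∑ i : Fin n, ((if π i = i then (1 : ℝ) else 0) - 1 / (n : ℝ)) *
               (φ (x i).1 (x i).2 - a (x i).1 - b (x i).2 + m)
           ((Nat.factorial n : ℝ))⁻¹ *
               ∑ π : Equiv.Perm (Fin n),
                 ∫ x : Fin n → E × E, (R x π) ^ 2 ∂(Measure.pi fun _ => P)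
             ≤ C * ((∫ p, (φ p.1 p.2) ^ 2 ∂P)
                 + ∫ p, (φ p.1 p.2) ^ 2 ∂(P.fst.prod P.snd)))) ∧
    (∀ (n : ℕ) (i : Fin n),
      ((Nat.factorial n : ℝ))⁻¹ *
          ((Finset.univ.filter (fun π : Equiv.Perm (Fin n) => π i = i)).card : ℝ)
        = 1 / (n : ℝ)) ∧
    (∀ (n : ℕ) (i j : Fin n), i ≠ j →
      ((Nat.factorial n : ℝ))⁻¹ *
          ((Finset.univ.filter
            (fun π : Equiv.Perm (Fin n) => π i = i ∧ π j = j)).card : ℝ)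
        = 1 / ((n : ℝ) * ((n : ℝ) - 1))) := by
  refine ⟨⟨60, by norm_num, fun E _ P _ φ hφ hP hprod n hn => ?_⟩, fun n i => ?_,
    fun n i j hij => ?_⟩
  · have hR := average_integral_sq_sum_centered_fixedPoint_mul_le (α := Fin n) (by simpa using hn)
      (integrable_sq_doublyCentered hφ hP hprod)
    rw [Fintype.card_fin] at hR
    have hg := integral_sq_doublyCentered_le hφ hP hprod
    have hA : 0 ≤ ∫ p, (φ p.1 p.2) ^ 2 ∂P := integral_nonneg fun _ => sq_nonneg _
    refine hR.trans ?_
    linarith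
  · simpa using Equiv.Perm.inv_factorial_mul_card_filter_apply_eq_self i
  · simpa using Equiv.Perm.inv_factorial_mul_card_filter_apply_eq_self_and_apply_eq_self hij
end
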